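/- For every point cloud X : Fin N → ℝ³, every index i ∈ Fin N, every k with 1 ≤ k ≤ N, every R ∈ SO(3), and every T ∈ ℝ³, the centroid-relative feature transforms as a type-1 vector: f_i(L_{(R,T)}[X]) = R·f_i(X). -/

import Mathlib

open Matrix

noncomputable section

/-- `SO(3)`: real 3×3 orthogonal matrices of determinant 1. -/
abbrev SO3 := Matrix.specialOrthogonalGroup (Fin 3) ℝ

noncomputable instance : Group SO3 :=
  { (inferInstance : Monoid SO3) with
    inv := fun A => ⟨star A.1, ⟨Unitary.star_mem A.2.1, by
      have h : (star A.1).det = star (A.1.det) := by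
        rw [Matrix.star_eq_conjTranspose, Matrix.det_conjTranspose]
      have h2 : A.1.det = 1 := A.2.2
      simpa [MonoidHom.mem_mker, h2] using h⟩⟩
    inv_mul_cancel := fun A => Subtype.ext A.2.1.1 }

/-- Euclidean 3-space. -/
abbrev V3 := EuclideanSpace ℝ (Fin 3)

/-- Matrix-vector multiplication on Euclidean 3-space. -/
def mv (M : Matrix (Fin 3) (Fin 3) ℝ) (v : V3) : V3 :=
  (WithLp.equiv 2 (Fin 3 → ℝ)).symm (M *ᵥ (WithLp.equiv 2 (Fin 3 → ℝ) v))

/-- Roto-translation action `L_{(R,T)}` on point clouds: `(L_{(R,T)}[X]) i = R·(X i) + T`. -/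
def rt {N : ℕ} (R : SO3) (T : V3) (X : Fin N → V3) : Fin N → V3 :=
  fun i => mv (R : Matrix (Fin 3) (Fin 3) ℝ) (X i) + T

open scoped Classical in
/-- `d_k(X,i)`: the k-th smallest distance from `X i` to points of `X`. -/
def dk {N : ℕ} (X : Fin N → V3) (i : Fin N) (k : ℕ) : ℝ :=
  sInf { d : ℝ | k ≤ (Finset.univ.filter (fun j => ‖X i - X j‖ ≤ d)).card }

open scoped Classical in
/-- `N_i^k(X)`: the k-nearest-neighbor neighborhood of point `i` (including ties). -/
def nbhd {N : ℕ} (X : Fin N → V3) (i : Fin N) (k : ℕ) : Finset (Fin N) :=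
  Finset.univ.filter (fun j => ‖X i - X j‖ ≤ dk X i k)

/-- The centroid-relative feature `f_i(X) = X i − (1/|N_i^k(X)|)·Σ_{j ∈ N_i^k(X)} X j`. -/
def feat {N : ℕ} (X : Fin N → V3) (i : Fin N) (k : ℕ) : V3 :=
  X i - ((nbhd X i k).card : ℝ)⁻¹ • ∑ j ∈ nbhd X i k, X j

/-! The feature is the displacement of `X i` from the centroid of its neighbourhood. A rigid motion
preserves all distances, hence the neighbourhood; it commutes with centroids because it is affine;
and its linear part, the rotation, is all that acts on a displacement. -/

lemma AffineMap.map_centroid {𝕜 ι V P V₂ P₂ : Type*} [DivisionRing 𝕜] [CharZero 𝕜]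
    [AddCommGroup V] [Module 𝕜 V] [AddTorsor V P] [AddCommGroup V₂] [Module 𝕜 V₂]
    [AddTorsor V₂ P₂] (f : P →ᵃ[𝕜] P₂) {s : Finset ι} (hs : s.Nonempty) (p : ι → P) :
    f (s.centroid 𝕜 p) = s.centroid 𝕜 (f ∘ p) :=
  Finset.map_affineCombination _ _ _ (s.sum_centroidWeights_eq_one_of_nonempty 𝕜 hs) f

lemma mv_eq_toEuclideanCLM (M : Matrix (Fin 3) (Fin 3) ℝ) (v : V3) :
    mv M v = toEuclideanCLM (𝕜 := ℝ) M v :=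
  rfl

lemma norm_mv_of_mem_unitary {M : Matrix (Fin 3) (Fin 3) ℝ} (hM : M ∈ unitary _) (v : V3) :
    ‖mv M v‖ = ‖v‖ :=
  (toEuclideanCLM (𝕜 := ℝ) M).norm_map_of_mem_unitary (Unitary.map_mem _ hM) v

def rtAffine (R : SO3) (T : V3) : V3 →ᵃ[ℝ] V3 :=
  (toEuclideanCLM (𝕜 := ℝ) (R : Matrix (Fin 3) (Fin 3) ℝ)).toLinearMap.toAffineMap +
    AffineMap.const ℝ V3 T

lemma rt_eq_rtAffine_comp {N : ℕ} (R : SO3) (T : V3) (X : Fin N → V3) :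
    rt R T X = rtAffine R T ∘ X :=
  rfl

lemma rtAffine_linear_apply (R : SO3) (T : V3) (v : V3) :
    (rtAffine R T).linear v = mv (R : Matrix (Fin 3) (Fin 3) ℝ) v := by
  simp [rtAffine, mv_eq_toEuclideanCLM]

lemma norm_rt_sub_rt {N : ℕ} (R : SO3) (T : V3) (X : Fin N → V3) (i j : Fin N) :
    ‖rt R T X i - rt R T X j‖ = ‖X i - X j‖ := by
  rw [rt, rt, add_sub_add_right_eq_sub, mv_eq_toEuclideanCLM, mv_eq_toEuclideanCLM, ← map_sub,
    ← mv_eq_toEuclideanCLM, norm_mv_of_mem_unitary R.2.1]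

section Neighbourhood

variable {N : ℕ} {X Y : Fin N → V3} {i : Fin N} {k : ℕ}

lemma dk_congr (h : ∀ j, ‖Y i - Y j‖ = ‖X i - X j‖) : dk Y i k = dk X i k := by
  simp only [dk, h]

lemma nbhd_congr (h : ∀ j, ‖Y i - Y j‖ = ‖X i - X j‖) : nbhd Y i k = nbhd X i k := by
  simp only [nbhd, h, dk_congr h]

lemma dk_nonneg (hk : 1 ≤ k) : 0 ≤ dk X i k := by
  refine Real.sInf_nonneg fun d hd => ?_
  obtain ⟨j, hj⟩ := Finset.card_pos.mp (lt_of_lt_of_le hk hd)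
  exact (norm_nonneg _).trans (Finset.mem_filter.mp hj).2

lemma self_mem_nbhd (hk : 1 ≤ k) : i ∈ nbhd X i k := by
  simp [nbhd, dk_nonneg hk]

lemma feat_eq_vsub_centroid (hk : 1 ≤ k) :
    feat X i k = X i -ᵥ (nbhd X i k).centroid ℝ X := by
  rw [feat, Finset.centroid_def, Finset.affineCombination_eq_linear_combination _ _ _
    (Finset.sum_centroidWeights_eq_one_of_nonempty ℝ _ ⟨i, self_mem_nbhd hk⟩)]
  simp only [Finset.centroidWeights_apply, ← Finset.smul_sum, vsub_eq_sub]

end Neighbourhood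

theorem feat_equivariant_general (N : ℕ) (X : Fin N → V3) (i : Fin N) (k : ℕ)
    (hk1 : 1 ≤ k) (R : SO3) (T : V3) :
    feat (rt R T X) i k = mv (R : Matrix (Fin 3) (Fin 3) ℝ) (feat X i k) := by
  have hnbhd : nbhd (rt R T X) i k = nbhd X i k := nbhd_congr (norm_rt_sub_rt R T X i)
  rw [feat_eq_vsub_centroid hk1, feat_eq_vsub_centroid hk1, hnbhd, rt_eq_rtAffine_comp,
    ← AffineMap.map_centroid _ ⟨i, self_mem_nbhd hk1⟩, Function.comp_apply,
    ← AffineMap.linearMap_vsub, rtAffine_linear_apply]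

/-- the centroid-relative feature transforms as a type-1 vector:
`f_i(L_{(R,T)}[X]) = R·f_i(X)`. -/
theorem feat_equivariant (N : ℕ) (X : Fin N → V3) (i : Fin N) (k : ℕ)
    (hk1 : 1 ≤ k) (hkN : k ≤ N) (R : SO3) (T : V3) :
    feat (rt R T X) i k = mv (R : Matrix (Fin 3) (Fin 3) ℝ) (feat X i k) :=
  feat_equivariant_general N X i k hk1 R T
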